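/- arXiv:1401.1565 — 3 statements merged into one kernel-verified Lean document; each statement's English description precedes it below -/
import Mathlib

section
/- The homology ker δ / im δ of the complex (C, δ) is a free R-module of rank one, generated by the homology class of z_6. -/
/-!
The functional `x ↦ x 0 + x 6 + x 12` vanishes on boundaries (the coefficients `x 5` and `x 7`
of a chain `x` each enter its boundary twice, and `2 = 0` in `R`) and takes the value `1` on
`z 6`, so the coefficient of `z 6` in the class of a cycle is unique. Existence is an explicit
primitive: a cycle `c` differs from `(c 0 + c 6 + c 12) • z 6` by the boundary of
`c 1 • z 0 + c 2 • z 3 + c 0 • z 5 + c 12 • z 7 + c 11 • z 8 + c 10 • z 9`.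
-/

noncomputable section

abbrev R : Type := LaurentPolynomial (ZMod 2)

abbrev C : Type := Fin 13 → R

/-- The standard basis of `C`, modeling the generators `z_0, ..., z_12`. -/
def z (i : Fin 13) : C := Pi.single i 1

theorem existsUnique_eq_smul_add_of_retraction {S M N : Type*} [Semiring S] [AddCommMonoid M]
    [AddCommMonoid N] [Module S M] [Module S N] {δ : N →ₗ[S] M} {φ : M →ₗ[S] S} {g c : M}
    (hφδ : ∀ b, φ (δ b) = 0) (hφg : φ g = 1) (hc : ∃ b, c = φ c • g + δ b) :
    ∃! r : S, ∃ b, c = r • g + δ b := by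
  refine ⟨φ c, hc, fun r ⟨b, hb⟩ => ?_⟩
  simpa [hφg, hφδ] using (congrArg φ hb).symm

instance : CharP R 2 := charP_of_injective_algebraMap' (ZMod 2) 2

def differential : C →ₗ[R] C := (Pi.basisFun R (Fin 13)).constr R
  ![z 1, 0, z 1, z 2 + z 4, z 1, z 0 + z 4 + z 6, 0, z 6 + z 8 + z 12, z 11, z 8 + z 10, z 11, 0,
    z 11]

theorem eq_differential (δ : C →ₗ[R] C)
    (h0 : δ (z 0) = z 1) (h1 : δ (z 1) = 0)
    (h2 : δ (z 2) = z 1) (h3 : δ (z 3) = z 2 + z 4)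
    (h4 : δ (z 4) = z 1) (h5 : δ (z 5) = z 0 + z 4 + z 6)
    (h6 : δ (z 6) = 0) (h7 : δ (z 7) = z 6 + z 8 + z 12)
    (h8 : δ (z 8) = z 11) (h9 : δ (z 9) = z 8 + z 10)
    (h10 : δ (z 10) = z 11) (h11 : δ (z 11) = 0)
    (h12 : δ (z 12) = z 11) : δ = differential := by
  refine (Pi.basisFun R (Fin 13)).ext fun i => ?_
  rw [differential, Module.Basis.constr_basis, Pi.basisFun_apply, ← z]
  fin_cases i <;> assumption

theorem differential_apply (x : C) : differential x =
    ![x 5, x 0 + x 2 + x 4, x 3, 0, x 3 + x 5, 0, x 5 + x 7, 0, x 7 + x 9, 0, x 9,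
      x 8 + x 10 + x 12, x 7] := by
  rw [differential, Module.Basis.constr_apply_fintype]
  funext i
  fin_cases i <;> simp [Fin.sum_univ_succ, z] <;> ring

theorem cycle_conditions {c : C} (hc : differential c = 0) :
    c 3 = 0 ∧ c 0 + c 2 + c 4 = 0 ∧ c 5 = 0 ∧ c 7 = 0 ∧ c 9 = 0 ∧ c 8 + c 10 + c 12 = 0 := by
  rw [differential_apply] at hc
  exact ⟨congrFun hc 2, congrFun hc 1, congrFun hc 0, congrFun hc 12, congrFun hc 10,
    congrFun hc 11⟩

def cycleCoeff : C →ₗ[R] R :=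
  let π (i : Fin 13) : C →ₗ[R] R := LinearMap.proj i
  π 0 + π 6 + π 12

theorem cycleCoeff_z_six : cycleCoeff (z 6) = 1 := by
  simp [cycleCoeff, z]

theorem cycleCoeff_differential (x : C) : cycleCoeff (differential x) = 0 := by
  simp only [cycleCoeff, differential_apply, LinearMap.add_apply, LinearMap.coe_proj,
    Function.eval, Matrix.cons_val, Matrix.cons_val_zero]
  grind

theorem eq_cycleCoeff_smul_add_differential {c : C} (hc : differential c = 0) :
    c = cycleCoeff c • z 6 +
      differential ![c 1, 0, 0, c 2, 0, c 0, 0, c 12, c 11, c 10, 0, 0, 0] := by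
  obtain ⟨h3, h024, h5, h7, h9, h81012⟩ := cycle_conditions hc
  funext i
  fin_cases i <;> simp [differential_apply, cycleCoeff, z] <;> grind

theorem homology_of_C_free_rank_one_generated_by_z6
    (δ : C →ₗ[R] C)
    (h0 : δ (z 0) = z 1) (h1 : δ (z 1) = 0)
    (h2 : δ (z 2) = z 1) (h3 : δ (z 3) = z 2 + z 4)
    (h4 : δ (z 4) = z 1) (h5 : δ (z 5) = z 0 + z 4 + z 6)
    (h6 : δ (z 6) = 0) (h7 : δ (z 7) = z 6 + z 8 + z 12)
    (h8 : δ (z 8) = z 11) (h9 : δ (z 9) = z 8 + z 10)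
    (h10 : δ (z 10) = z 11) (h11 : δ (z 11) = 0)
    (h12 : δ (z 12) = z 11) :
    ∀ c : C, δ c = 0 → ∃! r : R, ∃ b : C, c = r • z 6 + δ b := by
  obtain rfl := eq_differential δ h0 h1 h2 h3 h4 h5 h6 h7 h8 h9 h10 h11 h12
  intro c hc
  exact existsUnique_eq_smul_add_of_retraction cycleCoeff_differential cycleCoeff_z_six
    ⟨_, eq_cycleCoeff_smul_add_differential hc⟩

end
end

section
/- Define the following 45 elements of T: z_0 = x_0y_0, z_1 = x_0y_1, z_2 = x_0y_2 + x_1y_3 + x_3y_3 + x_4y_4, z_3 = x_1y_2, z_4 = x_2y_2 + x_3y_3 + x_1y_1 + x_4y_4, z_5 = x_3y_2 + x_5y_4 + x_1y_0, z_6 = x_4y_2 + x_5y_3 + x_3y_1 + x_6y_4 + x_2y_0, z_7 = x_5y_2 + x_7y_4 + x_3y_0, z_8 = x_6y_2 + x_7y_3 + x_5y_1 + x_4y_0, z_9 = x_7y_2, z_{10} = x_8y_2 + x_7y_1 + x_4y_0 + x_5y_1, z_{11} = x_8y_3, z_{12} = x_8y_4; and for i = 0,1,2,3: w^i_0 = x_{2i+1}y_4,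 w^i_1 = x_{2i}y_4, w^i_2 = x_{2i}y_3, w^i_3 = x_{2i+1}y_3 + x_{2i+2}y_4, and w^{i+4}_0 = x_{2i+1}y_0, w^{i+4}_1 = x_{2i+1}y_1 + x_{2i}y_0, w^{i+4}_2 = x_{2i+2}y_1, w^{i+4}_3 = x_{2i+2}y_0. Then: (1) these 45 elements form an R-basis of T; (2) the R-span of {z_0, ..., z_{12}} is closed under ∂, with ∂(z_0) = z_1, ∂(z_2) = z_1, ∂(z_3) = z_2 + z_4, ∂(z_4) = z_1, ∂(z_5) = z_0 + z_4 + z_6, ∂(z_7) = z_6 + z_8 + z_{12}, ∂(z_8) = z_{11}, ∂(z_9) = z_8 + z_{10}, ∂(z_{10}) = z_{11}, ∂(z_{12}) = z_{11}, and ∂(z_1) = ∂(z_6) = ∂(z_{11}) = 0; (3) for each i = 0, ..., 7, the R-span of {w^i_0, w^i_1, w^i_2, w^i_3} is closed under ∂, with ∂(w^i_0) = w^i_1 + w^i_3, ∂(w^i_1) = w^i_2, ∂(w^i_3) = w^i_2, and ∂(w^i_2) = 0. In particular T decomposes as a direct sum of these nine subcomplexes. -/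
/-!
Each of the 45 new elements is a generator `t i j` plus generators of strictly smaller `level`
(level 2 for the `x_i y_2`, level 1 for `x_i y_j` with `i`, `j` odd, level 0 otherwise), so by
induction on the level every generator lies in their span. A spanning family of `45 = rank T`
elements of a free module over a commutative ring is a basis, since a surjective endomorphism of
a finitely generated module is injective. The differential identities are a direct computation,
in which coefficients are reduced using `2 = 0` in `R`.
-/

noncomputable section

open TensorProduct

abbrev X : Type := Fin 9 → R
abbrev Y : Type := Fin 5 → R
abbrev T : Type := X ⊗[R] Y

def x (i : Fin 9) : X := Pi.single i 1
def y (j : Fin 5) : Y := Pi.single j 1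

/-- The generator `x_i y_j := x_i ⊗ y_j` of the tensor product `T`. -/
def t (i : Fin 9) (j : Fin 5) : T := x i ⊗ₜ[R] y j

/-- The elements `z_0, ..., z_12` of the change of basis. -/
def zel : Fin 13 → T :=
  ![t 0 0,
    t 0 1,
    t 0 2 + t 1 3 + t 3 3 + t 4 4,
    t 1 2,
    t 2 2 + t 3 3 + t 1 1 + t 4 4,
    t 3 2 + t 5 4 + t 1 0,
    t 4 2 + t 5 3 + t 3 1 + t 6 4 + t 2 0,
    t 5 2 + t 7 4 + t 3 0,
    t 6 2 + t 7 3 + t 5 1 + t 4 0,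
    t 7 2,
    t 8 2 + t 7 1 + t 4 0 + t 5 1,
    t 8 3,
    t 8 4]

/-- The elements `w^i_j` (`i = 0, ..., 7`, `j = 0, ..., 3`) of the change of
basis: for `i = 0,1,2,3`, `w^i_0 = x_{2i+1} y_4`, `w^i_1 = x_{2i} y_4`,
`w^i_2 = x_{2i} y_3`, `w^i_3 = x_{2i+1} y_3 + x_{2i+2} y_4`; and
`w^{i+4}_0 = x_{2i+1} y_0`, `w^{i+4}_1 = x_{2i+1} y_1 + x_{2i} y_0`,
`w^{i+4}_2 = x_{2i+2} y_1`, `w^{i+4}_3 = x_{2i+2} y_0`. -/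
def wel : Fin 8 → Fin 4 → T :=
  ![![t 1 4, t 0 4, t 0 3, t 1 3 + t 2 4],
    ![t 3 4, t 2 4, t 2 3, t 3 3 + t 4 4],
    ![t 5 4, t 4 4, t 4 3, t 5 3 + t 6 4],
    ![t 7 4, t 6 4, t 6 3, t 7 3 + t 8 4],
    ![t 1 0, t 1 1 + t 0 0, t 2 1, t 2 0],
    ![t 3 0, t 3 1 + t 2 0, t 4 1, t 4 0],
    ![t 5 0, t 5 1 + t 4 0, t 6 1, t 6 0],
    ![t 7 0, t 7 1 + t 6 0, t 8 1, t 8 0]]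

open Submodule Set

instance inst_s4 : CharP R 2 :=
  charP_of_injective_algebraMap (algebraMap (ZMod 2) R).injective 2

section Triangular

variable {S M ι κ : Type*} [Ring S] [AddCommGroup M] [Module S M]

theorem span_range_le_of_sub_mem_span_lower (b : κ → M) (v : ι → M) (level : κ → ℕ)
    (h : ∀ p, ∃ i, v i - b p ∈ span S (b '' {q | level q < level p})) :
    span S (range b) ≤ span S (range v) := by
  rw [span_le, range_subset_iff]
  intro p
  induction hn : level p using Nat.strong_induction_on generalizing p with
  | _ n ih =>
    obtain ⟨i, hi⟩ := h p
    have hlower : span S (b '' {q | level q < level p}) ≤ span S (range v) :=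
      span_le.2 <| by rintro _ ⟨q, hq, rfl⟩; exact ih _ (hn ▸ hq) q rfl
    simpa using sub_mem (mem_span_of_mem (mem_range_self i)) (hlower hi)

end Triangular

def tBasis : Module.Basis (Fin 9 × Fin 5) R T :=
  (Pi.basisFun R (Fin 9)).tensorProduct (Pi.basisFun R (Fin 5))

theorem coe_tBasis : ⇑tBasis = fun p => t p.1 p.2 := by
  ext ⟨i, j⟩ : 1
  simp [tBasis, Module.Basis.tensorProduct_apply, t, x, y, Pi.basisFun_apply]

abbrev zw : Fin 13 ⊕ Fin 8 × Fin 4 → T := Sum.elim zel fun p => wel p.1 p.2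

def level (p : Fin 9 × Fin 5) : ℕ :=
  if p.2 = 2 then 2 else if Odd p.1.val ∧ Odd p.2.val then 1 else 0

/-- `zw (leading i j)` is the new basis element with leading generator `t i j`. -/
def leading : Fin 9 → Fin 5 → Fin 13 ⊕ Fin 8 × Fin 4 :=
  open Sum in
  ![![inl 0, inl 1, inl 2, inr (0, 2), inr (0, 1)],
    ![inr (4, 0), inr (4, 1), inl 3, inr (0, 3), inr (0, 0)],
    ![inr (4, 3), inr (4, 2), inl 4, inr (1, 2), inr (1, 1)],
    ![inr (5, 0), inr (5, 1), inl 5, inr (1, 3), inr (1, 0)],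
    ![inr (5, 3), inr (5, 2), inl 6, inr (2, 2), inr (2, 1)],
    ![inr (6, 0), inr (6, 1), inl 7, inr (2, 3), inr (2, 0)],
    ![inr (6, 3), inr (6, 2), inl 8, inr (3, 2), inr (3, 1)],
    ![inr (7, 0), inr (7, 1), inl 9, inr (3, 3), inr (3, 0)],
    ![inr (7, 3), inr (7, 2), inl 10, inl 11, inl 12]]

theorem t_mem_span_lower {p : Fin 9 × Fin 5} (i : Fin 9) (j : Fin 5)
    (h : level (i, j) < level p) :
    t i j ∈ span R ((fun q => t q.1 q.2) '' {q | level q < level p}) :=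
  subset_span ⟨(i, j), h, rfl⟩

theorem zw_leading_sub_mem_span_lower (i : Fin 9) (j : Fin 5) :
    zw (leading i j) - t i j ∈ span R ((fun q => t q.1 q.2) '' {q | level q < level (i, j)}) := by
  fin_cases i <;> fin_cases j <;>
    simp only [Fin.zero_eta, Fin.mk_one, Fin.reduceFinMk, Fin.isValue, leading, Matrix.cons_val',
      Matrix.cons_val, Matrix.cons_val_zero, Matrix.cons_val_one, Matrix.cons_val_fin_one,
      Sum.elim_inl, Sum.elim_inr, zel, wel, add_assoc, add_sub_cancel_left, sub_self, zero_mem] <;>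
    apply_rules [add_mem, t_mem_span_lower] <;> decide

theorem span_zw : span R (range zw) = ⊤ := by
  refine top_unique (le_of_eq_of_le ?_ (span_range_le_of_sub_mem_span_lower _ zw level
    fun p => ⟨leading p.1 p.2, zw_leading_sub_mem_span_lower p.1 p.2⟩))
  rw [← tBasis.span_eq, coe_tBasis]

theorem linearIndependent_zw : LinearIndependent R zw :=
  linearIndependent_of_top_le_span_of_card_eq_finrank span_zw.ge
    (by simp [Module.finrank_eq_card_basis tBasis])

def diffX : X →ₗ[R] X :=
  (Pi.basisFun R (Fin 9)).constr R ![0, x 0 + x 2, 0, x 2 + x 4, 0, x 4 + x 6, 0, x 6 + x 8, 0]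

def diffY : Y →ₗ[R] Y :=
  (Pi.basisFun R (Fin 5)).constr R ![y 1, 0, y 1 + y 3, 0, y 3]

def diffT : T →ₗ[R] T := LinearMap.rTensor Y diffX + LinearMap.lTensor X diffY

theorem diffX_x (i : Fin 9) :
    diffX (x i) = ![0, x 0 + x 2, 0, x 2 + x 4, 0, x 4 + x 6, 0, x 6 + x 8, 0] i := by
  rw [x, ← Pi.basisFun_apply, diffX, Module.Basis.constr_basis]

theorem diffY_y (j : Fin 5) : diffY (y j) = ![y 1, 0, y 1 + y 3, 0, y 3] j := by
  rw [y, ← Pi.basisFun_apply, diffY, Module.Basis.constr_basis]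

theorem diffT_tmul (a : X) (b : Y) : diffT (a ⊗ₜ b) = diffX a ⊗ₜ b + a ⊗ₜ diffY b :=
  rfl

theorem diffT_zel (k : Fin 13) :
    diffT (zel k) = ![zel 1, 0, zel 1, zel 2 + zel 4, zel 1, zel 0 + zel 4 + zel 6, 0,
      zel 6 + zel 8 + zel 12, zel 11, zel 8 + zel 10, zel 11, 0, zel 11] k := by
  fin_cases k <;>
    simp only [zel, t, Fin.isValue, Fin.mk_one, Fin.reduceFinMk, Fin.zero_eta, Matrix.cons_val,
      Matrix.cons_val_one, Matrix.cons_val_zero, Nat.reduceAdd, Nat.succ_eq_add_one, map_add,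
      diffT_tmul, diffX_x, diffY_y, tmul_add, add_tmul, tmul_zero, zero_tmul, add_zero, zero_add] <;>
    -- the factor `(1 : R)` makes `match_scalars` compare coefficients in `R`, where `2 = 0`, not in `ℕ`
    refine (one_smul R _).symm.trans ?_ <;>
    match_scalars <;> ring_nf <;> simp [CharTwo.ofNat_eq_mod]

theorem diffT_wel (i : Fin 8) (j : Fin 4) :
    diffT (wel i j) = ![wel i 1 + wel i 3, wel i 2, 0, wel i 2] j := by
  fin_cases i <;> fin_cases j <;>
    simp only [wel, t, Fin.isValue, Fin.mk_one, Fin.reduceFinMk, Fin.zero_eta, Matrix.cons_val,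
      Matrix.cons_val', Matrix.cons_val_fin_one, Matrix.cons_val_one, Matrix.cons_val_zero,
      Nat.reduceAdd, Nat.succ_eq_add_one, map_add, diffT_tmul, diffX_x, diffY_y, add_tmul,
      tmul_zero, zero_tmul, add_zero, zero_add] <;>
    refine (one_smul R _).symm.trans ?_ <;>
    match_scalars <;> ring_nf <;> simp [CharTwo.ofNat_eq_mod]

theorem span_zel_le_comap_diffT : span R (range zel) ≤ (span R (range zel)).comap diffT := by
  refine span_le.2 <| range_subset_iff.2 fun k => ?_
  rw [SetLike.mem_coe, mem_comap, diffT_zel]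
  fin_cases k <;> simp (maxDischargeDepth := 3) [add_mem, mem_span_of_mem]

theorem span_wel_le_comap_diffT (i : Fin 8) :
    span R (range (wel i)) ≤ (span R (range (wel i))).comap diffT := by
  refine span_le.2 <| range_subset_iff.2 fun j => ?_
  rw [SetLike.mem_coe, mem_comap, diffT_wel]
  fin_cases j <;> simp [add_mem, mem_span_of_mem]

theorem change_of_basis_decomposition
    (dX : X →ₗ[R] X)
    (hx0 : dX (x 0) = 0) (hx1 : dX (x 1) = x 0 + x 2)
    (hx2 : dX (x 2) = 0) (hx3 : dX (x 3) = x 2 + x 4)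
    (hx4 : dX (x 4) = 0) (hx5 : dX (x 5) = x 4 + x 6)
    (hx6 : dX (x 6) = 0) (hx7 : dX (x 7) = x 6 + x 8)
    (hx8 : dX (x 8) = 0)
    (dY : Y →ₗ[R] Y)
    (hy0 : dY (y 0) = y 1) (hy1 : dY (y 1) = 0)
    (hy2 : dY (y 2) = y 1 + y 3) (hy3 : dY (y 3) = 0)
    (hy4 : dY (y 4) = y 3)
    (dT : T →ₗ[R] T)
    (hdT : dT = LinearMap.rTensor Y dX + LinearMap.lTensor X dY) :
    -- (1) the 45 elements form an `R`-basis of `T`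
    (LinearIndependent R
        (Sum.elim zel (fun p : Fin 8 × Fin 4 => wel p.1 p.2)) ∧
      Submodule.span R
        (Set.range (Sum.elim zel (fun p : Fin 8 × Fin 4 => wel p.1 p.2))) = ⊤) ∧
    -- (2) the span of the `zel`'s is closed under `dT`, with these values
    (Submodule.span R (Set.range zel) ≤
        (Submodule.span R (Set.range zel)).comap dT ∧
      dT (zel 0) = zel 1 ∧ dT (zel 1) = 0 ∧ dT (zel 2) = zel 1 ∧
      dT (zel 3) = zel 2 + zel 4 ∧ dT (zel 4) = zel 1 ∧
      dT (zel 5) = zel 0 + zel 4 + zel 6 ∧ dT (zel 6) = 0 ∧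
      dT (zel 7) = zel 6 + zel 8 + zel 12 ∧ dT (zel 8) = zel 11 ∧
      dT (zel 9) = zel 8 + zel 10 ∧ dT (zel 10) = zel 11 ∧
      dT (zel 11) = 0 ∧ dT (zel 12) = zel 11) ∧
    -- (3) each `wel i` spans a subcomplex, with these values
    (∀ i : Fin 8,
      Submodule.span R (Set.range (wel i)) ≤
        (Submodule.span R (Set.range (wel i))).comap dT ∧
      dT (wel i 0) = wel i 1 + wel i 3 ∧ dT (wel i 1) = wel i 2 ∧
      dT (wel i 2) = 0 ∧ dT (wel i 3) = wel i 2) := by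
  obtain rfl : dX = diffX := (Pi.basisFun R (Fin 9)).ext fun i => by
    rw [Pi.basisFun_apply, ← x, diffX_x]
    fin_cases i <;> assumption
  obtain rfl : dY = diffY := (Pi.basisFun R (Fin 5)).ext fun j => by
    rw [Pi.basisFun_apply, ← y, diffY_y]
    fin_cases j <;> assumption
  obtain rfl : dT = diffT := hdT
  exact ⟨⟨linearIndependent_zw, span_zw⟩,
    ⟨span_zel_le_comap_diffT, diffT_zel 0, diffT_zel 1, diffT_zel 2, diffT_zel 3, diffT_zel 4,
      diffT_zel 5, diffT_zel 6, diffT_zel 7, diffT_zel 8, diffT_zel 9, diffT_zel 10, diffT_zel 11,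
      diffT_zel 12⟩,
    fun i => ⟨span_wel_le_comap_diffT i, diffT_wel i 0, diffT_wel i 1, diffT_wel i 2,
      diffT_wel i 3⟩⟩

end
end

section
/- The map v̂_1 is a chain map (d ∘ v̂_1 = v̂_1 ∘ d̂_1), and the induced map on homology H(Â_1) → H(B̂) is nonzero: indeed d̂_1(â_0) = 0 and v̂_1(â_0) = b_0, whose homology class generates H(B̂). (This is the statement that v̂_1 induces a nontrivial map on homology, showing nu(T_{2,9} # -T_{2,3;2,5}) ≤ 1.) -/
/-!
The three maps are determined by their values on the standard bases, so the chain-map identity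
is a check on thirteen basis vectors. For homology, the map `h` with `b₁ ↦ b₂`, `b₄ ↦ b₃`,
`b₆ ↦ b₅`, `b₈ ↦ b₇`, `b₁₀ ↦ b₉`, `b₁₁ ↦ b₁₂` (and the other basis vectors `↦ 0`) satisfies
`d h + h d = id - (c ↦ c₀ b₀)`, while the `b₀`-coordinate of every boundary vanishes; hence every
cycle is uniquely `c₀ b₀` plus a boundary.
-/

noncomputable section

abbrev F : Type := ZMod 2

abbrev Bhat : Type := Fin 13 → F
abbrev Ahat1 : Type := Fin 13 → F

/-- The standard basis of `Bhat`, modeling `b_0, ..., b_12`. -/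
def b (i : Fin 13) : Bhat := Pi.single i 1

/-- The standard basis of `Ahat1`, modeling `â_0, ..., â_12`. -/
def a (i : Fin 13) : Ahat1 := Pi.single i 1

theorem existsUnique_smul_add_boundary_of_homotopy {R M : Type*} [Semiring R] [AddCommMonoid M]
    [Module R M] {d h : M →ₗ[R] M} {φ : M →ₗ[R] R} {z : M}
    (homotopy : d ∘ₗ h + h ∘ₗ d + φ.smulRight z = LinearMap.id)
    (hφd : φ ∘ₗ d = 0) (hφz : φ z = 1) {c : M} (hc : d c = 0) :
    ∃! r : R, ∃ e : M, c = r • z + d e := by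
  refine ⟨φ c, ⟨h c, ?_⟩, ?_⟩
  · simpa [hc, add_comm] using (LinearMap.congr_fun homotopy c).symm
  · rintro r ⟨e, rfl⟩
    have hφde : φ (d e) = 0 := LinearMap.congr_fun hφd e
    simp [hφz, hφde]

theorem LinearMap.pi_ext_single_one {R M ι : Type*} [Semiring R] [AddCommMonoid M] [Module R M]
    [Finite ι] [DecidableEq ι] {f g : (ι → R) →ₗ[R] M}
    (h : ∀ i, f (Pi.single i 1) = g (Pi.single i 1)) : f = g :=
  LinearMap.pi_ext' fun i => LinearMap.ext_ring (h i)

theorem b_apply (i j : Fin 13) : b i j = if j = i then 1 else 0 :=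
  Pi.single_apply i 1 j

def bhatDiff : Bhat →ₗ[F] Bhat :=
  Fintype.linearCombination F ![0, 0, b 1, b 4, 0, b 6, 0, b 8, 0, b 10, 0, 0, b 11]

def ahatDiff : Ahat1 →ₗ[F] Ahat1 :=
  Fintype.linearCombination F ![0, 0, 0, a 2, 0, a 4 + a 6, 0, a 8, 0, a 10, 0, 0, a 11]

def v1Map : Ahat1 →ₗ[F] Bhat :=
  Fintype.linearCombination F ![b 0, b 1, 0, 0, 0, b 5, b 6, b 7, b 8, b 9, b 10, b 11, b 12]

def bhatContraction : Bhat →ₗ[F] Bhat :=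
  Fintype.linearCombination F ![0, b 2, 0, 0, b 3, 0, b 5, 0, b 7, 0, b 9, b 12, 0]

theorem bhatDiff_b (i : Fin 13) :
    bhatDiff (b i) = ![0, 0, b 1, b 4, 0, b 6, 0, b 8, 0, b 10, 0, 0, b 11] i :=
  (Fintype.linearCombination_apply_single F _ i 1).trans (one_smul F _)

theorem ahatDiff_a (i : Fin 13) :
    ahatDiff (a i) = ![0, 0, 0, a 2, 0, a 4 + a 6, 0, a 8, 0, a 10, 0, 0, a 11] i :=
  (Fintype.linearCombination_apply_single F _ i 1).trans (one_smul F _)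

theorem v1Map_a (i : Fin 13) :
    v1Map (a i) = ![b 0, b 1, 0, 0, 0, b 5, b 6, b 7, b 8, b 9, b 10, b 11, b 12] i :=
  (Fintype.linearCombination_apply_single F _ i 1).trans (one_smul F _)

theorem bhatContraction_b (i : Fin 13) :
    bhatContraction (b i) = ![0, b 2, 0, 0, b 3, 0, b 5, 0, b 7, 0, b 9, b 12, 0] i :=
  (Fintype.linearCombination_apply_single F _ i 1).trans (one_smul F _)

theorem eq_bhatDiff {d : Bhat →ₗ[F] Bhat}
    (hb0 : d (b 0) = 0) (hb1 : d (b 1) = 0)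
    (hb2 : d (b 2) = b 1) (hb3 : d (b 3) = b 4)
    (hb4 : d (b 4) = 0) (hb5 : d (b 5) = b 6)
    (hb6 : d (b 6) = 0) (hb7 : d (b 7) = b 8)
    (hb8 : d (b 8) = 0) (hb9 : d (b 9) = b 10)
    (hb10 : d (b 10) = 0) (hb11 : d (b 11) = 0)
    (hb12 : d (b 12) = b 11) : d = bhatDiff :=
  LinearMap.pi_ext_single_one fun i => by
    rw [← b, bhatDiff_b]
    fin_cases i <;> assumption

theorem eq_ahatDiff {d1 : Ahat1 →ₗ[F] Ahat1}
    (ha0 : d1 (a 0) = 0) (ha1 : d1 (a 1) = 0)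
    (ha2 : d1 (a 2) = 0) (ha3 : d1 (a 3) = a 2)
    (ha4 : d1 (a 4) = 0) (ha5 : d1 (a 5) = a 4 + a 6)
    (ha6 : d1 (a 6) = 0) (ha7 : d1 (a 7) = a 8)
    (ha8 : d1 (a 8) = 0) (ha9 : d1 (a 9) = a 10)
    (ha10 : d1 (a 10) = 0) (ha11 : d1 (a 11) = 0)
    (ha12 : d1 (a 12) = a 11) : d1 = ahatDiff :=
  LinearMap.pi_ext_single_one fun i => by
    rw [← a, ahatDiff_a]
    fin_cases i <;> assumption

theorem eq_v1Map {v1 : Ahat1 →ₗ[F] Bhat}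
    (hv0 : v1 (a 0) = b 0) (hv1 : v1 (a 1) = b 1)
    (hv2 : v1 (a 2) = 0) (hv3 : v1 (a 3) = 0)
    (hv4 : v1 (a 4) = 0) (hv5 : v1 (a 5) = b 5)
    (hv6 : v1 (a 6) = b 6) (hv7 : v1 (a 7) = b 7)
    (hv8 : v1 (a 8) = b 8) (hv9 : v1 (a 9) = b 9)
    (hv10 : v1 (a 10) = b 10) (hv11 : v1 (a 11) = b 11)
    (hv12 : v1 (a 12) = b 12) : v1 = v1Map :=
  LinearMap.pi_ext_single_one fun i => by
    rw [← a, v1Map_a]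
    fin_cases i <;> assumption

theorem bhatDiff_comp_v1Map : bhatDiff ∘ₗ v1Map = v1Map ∘ₗ ahatDiff :=
  LinearMap.pi_ext_single_one fun i => by
    rw [← a]
    fin_cases i <;> simp [bhatDiff_b, ahatDiff_a, v1Map_a]

theorem bhatDiff_bhatContraction_homotopy :
    bhatDiff ∘ₗ bhatContraction + bhatContraction ∘ₗ bhatDiff
      + (LinearMap.proj 0).smulRight (b 0) = LinearMap.id :=
  LinearMap.pi_ext_single_one fun i => by
    rw [← b]
    fin_cases i <;> simp [bhatDiff_b, bhatContraction_b, b_apply]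

theorem proj_zero_comp_bhatDiff : LinearMap.proj 0 ∘ₗ bhatDiff = 0 :=
  LinearMap.pi_ext_single_one fun i => by
    rw [← b]
    fin_cases i <;> simp [bhatDiff_b, b_apply]

theorem v1_chain_map_nontrivial_on_homology
    (d : Bhat →ₗ[F] Bhat)
    (hb0 : d (b 0) = 0) (hb1 : d (b 1) = 0)
    (hb2 : d (b 2) = b 1) (hb3 : d (b 3) = b 4)
    (hb4 : d (b 4) = 0) (hb5 : d (b 5) = b 6)
    (hb6 : d (b 6) = 0) (hb7 : d (b 7) = b 8)
    (hb8 : d (b 8) = 0) (hb9 : d (b 9) = b 10)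
    (hb10 : d (b 10) = 0) (hb11 : d (b 11) = 0)
    (hb12 : d (b 12) = b 11)
    (d1 : Ahat1 →ₗ[F] Ahat1)
    (ha0 : d1 (a 0) = 0) (ha1 : d1 (a 1) = 0)
    (ha2 : d1 (a 2) = 0) (ha3 : d1 (a 3) = a 2)
    (ha4 : d1 (a 4) = 0) (ha5 : d1 (a 5) = a 4 + a 6)
    (ha6 : d1 (a 6) = 0) (ha7 : d1 (a 7) = a 8)
    (ha8 : d1 (a 8) = 0) (ha9 : d1 (a 9) = a 10)
    (ha10 : d1 (a 10) = 0) (ha11 : d1 (a 11) = 0)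
    (ha12 : d1 (a 12) = a 11)
    (v1 : Ahat1 →ₗ[F] Bhat)
    (hv0 : v1 (a 0) = b 0) (hv1 : v1 (a 1) = b 1)
    (hv2 : v1 (a 2) = 0) (hv3 : v1 (a 3) = 0)
    (hv4 : v1 (a 4) = 0) (hv5 : v1 (a 5) = b 5)
    (hv6 : v1 (a 6) = b 6) (hv7 : v1 (a 7) = b 7)
    (hv8 : v1 (a 8) = b 8) (hv9 : v1 (a 9) = b 9)
    (hv10 : v1 (a 10) = b 10) (hv11 : v1 (a 11) = b 11)
    (hv12 : v1 (a 12) = b 12) :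
    d.comp v1 = v1.comp d1 ∧
    d1 (a 0) = 0 ∧ v1 (a 0) = b 0 ∧
    (∀ c : Bhat, d c = 0 → ∃! r : F, ∃ e : Bhat, c = r • b 0 + d e) := by
  obtain rfl := eq_bhatDiff hb0 hb1 hb2 hb3 hb4 hb5 hb6 hb7 hb8 hb9 hb10 hb11 hb12
  obtain rfl := eq_ahatDiff ha0 ha1 ha2 ha3 ha4 ha5 ha6 ha7 ha8 ha9 ha10 ha11 ha12
  obtain rfl := eq_v1Map hv0 hv1 hv2 hv3 hv4 hv5 hv6 hv7 hv8 hv9 hv10 hv11 hv12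
  exact ⟨bhatDiff_comp_v1Map, ha0, hv0, fun c hc =>
    existsUnique_smul_add_boundary_of_homotopy bhatDiff_bhatContraction_homotopy
      proj_zero_comp_bhatDiff (by simp [b_apply]) hc⟩

end
end
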